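/- arXiv:1712.08397 — 4 statements merged into one kernel-verified Lean document; each statement's English description precedes it below -/
import Mathlib

section
/- Let $\mathcal{K}=(\mathcal{A},\{x^1,\ldots,x^m\},g)$ be a Kähler–Poisson algebra and define $\mathcal{D}^{ij}=\eta\{x^i,x^l\}g_{lk}\{x^j,x^k\}$ and $\mathcal{D}^i_{\ j}=\mathcal{D}^{ik}g_{kj}$. Then the map $\mathcal{D}:\mathcal{A}^m\to\mathcal{A}^m$, $\mathcal{D}(X)^i=\mathcal{D}^i_{\ j}X^j$, is an orthogonal projection with respect to $g(X,Y)=X^ig_{ij}Y^j$: that is, $\mathcal{D}^2=\mathcal{D}$ and $g(\mathcal{D}(X),Y)=g(X,\mathcal{D}(Y))$ for all $X,Y\in\mathcal{A}^m$. -/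
/-- `𝒟^{ij} = η {xⁱ, xˡ} g_{lk} {xʲ, xᵏ}`. -/
def Dmat {A : Type*} [CommRing A] {m : ℕ} (P : A → A → A) (x : Fin m → A)
    (g : Fin m → Fin m → A) (η : A) (i j : Fin m) : A :=
  η * ∑ l, ∑ k, P (x i) (x l) * g l k * P (x j) (x k)

/-- `𝒟^i_j = 𝒟^{ik} g_{kj}`. -/
def Dlow {A : Type*} [CommRing A] {m : ℕ} (P : A → A → A) (x : Fin m → A)
    (g : Fin m → Fin m → A) (η : A) (i j : Fin m) : A :=
  ∑ k, Dmat P x g η i k * g k j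

/-- `𝒟(X)^i = 𝒟^i_j X^j`. -/
def Dmap {A : Type*} [CommRing A] {m : ℕ} (P : A → A → A) (x : Fin m → A)
    (g : Fin m → Fin m → A) (η : A) (X : Fin m → A) : Fin m → A :=
  fun i => ∑ j, Dlow P x g η i j * X j

/-- The bilinear form `g(X,Y) = Xⁱ g_{ij} Yʲ` on `Aᵐ`. -/
def gvec {A : Type*} [CommRing A] {m : ℕ} (g : Fin m → Fin m → A)
    (X Y : Fin m → A) : A :=
  ∑ i, ∑ j, X i * g i j * Y j

/-!
With `B = ({xⁱ, xʲ})` and `G = (g_{ij})`, the Kähler–Poisson condition for `a = xⁱ`, `b = xʲ` is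
the matrix identity `η B G B G B = -B`, and antisymmetry of `B` turns `𝒟 = η B G Bᵀ G` into
`-η B G B G`. Then `𝒟² = η (η B G B G B) G B G = 𝒟`, and `G 𝒟 = -η G B G B G` is symmetric,
which is the self-adjointness of `𝒟` for `g`.
-/

open Matrix

theorem isIdempotentElem_neg_smul_mul_mul_mul {R S : Type*} [CommRing R] [Ring S] [Algebra R S]
    {p q : S} {η : R} (h : η • (p * q * p * q * p) = -p) :
    IsIdempotentElem (-(η • (p * q * p * q))) := by
  calc -(η • (p * q * p * q)) * -(η • (p * q * p * q))
      = η • ((η • (p * q * p * q * p)) * q * p * q) := by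
        simp only [neg_mul_neg, mul_smul_comm, smul_mul_assoc, smul_smul, mul_assoc]
    _ = -(η • (p * q * p * q)) := by
        rw [h]; simp only [neg_mul, smul_neg, mul_assoc]

namespace Matrix

variable {n R : Type*} [Fintype n] [CommRing R]

theorem isSymm_mul_neg_smul_mul_mul_mul {B G : Matrix n n R} (hB : Bᵀ = -B) (hG : G.IsSymm)
    (η : R) : (G * -(η • (B * G * B * G))).IsSymm := by
  simp only [IsSymm, transpose_mul, transpose_neg, transpose_smul, hB, hG.eq, mul_neg, neg_mul,
    neg_neg, mul_smul_comm, mul_assoc]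

theorem dotProduct_mulVec_mulVec_comm {D G : Matrix n n R} (hG : G.IsSymm) (hGD : (G * D).IsSymm)
    (X Y : n → R) : (D *ᵥ X) ⬝ᵥ (G *ᵥ Y) = X ⬝ᵥ (G *ᵥ (D *ᵥ Y)) := by
  have hDG : Dᵀ * G = G * D := by rw [← hGD.eq, transpose_mul, hG.eq]
  rw [← vecMul_transpose, ← dotProduct_mulVec, mulVec_mulVec, hDG, ← mulVec_mulVec]

end Matrix

section PoissonMatrix

variable {A : Type*} [CommRing A] {m : ℕ}

def poissonMatrix (P : A → A → A) (x : Fin m → A) : Matrix (Fin m) (Fin m) A :=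
  of fun i j => P (x i) (x j)

theorem poissonMatrix_transpose {P : A → A → A} (hP_antisym : ∀ a b, P a b = - P b a)
    (x : Fin m → A) : (poissonMatrix P x)ᵀ = -poissonMatrix P x := by
  ext i j
  exact hP_antisym (x j) (x i)

theorem of_Dlow (P : A → A → A) (x : Fin m → A) (g : Fin m → Fin m → A) (η : A) :
    of (Dlow P x g η) = η • (poissonMatrix P x * of g * (poissonMatrix P x)ᵀ * of g) := by
  ext i j
  simp only [Dlow, Dmat, poissonMatrix, of_apply, Matrix.smul_apply, mul_apply, transpose_apply,
    smul_eq_mul, Finset.sum_mul, Finset.mul_sum]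
  exact Finset.sum_congr rfl fun _ _ => by rw [Finset.sum_comm]; simp only [mul_assoc]

theorem smul_poissonMatrix_mul_eq_neg {P : A → A → A} {x : Fin m → A} {g : Fin m → Fin m → A}
    {η : A} (hKP : ∀ a b, η * (∑ i, ∑ j, ∑ k, ∑ l,
        P a (x i) * g i j * P (x j) (x k) * g k l * P (x l) b) = - P a b) :
    η • (poissonMatrix P x * of g * poissonMatrix P x * of g * poissonMatrix P x) =
      -poissonMatrix P x := by
  ext p q
  simpa only [poissonMatrix, Matrix.mul_assoc, mul_apply, of_apply, Matrix.smul_apply,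
    Matrix.neg_apply, smul_eq_mul, Finset.mul_sum, mul_assoc] using hKP (x p) (x q)

theorem Dmap_eq_mulVec (P : A → A → A) (x : Fin m → A) (g : Fin m → Fin m → A) (η : A)
    (X : Fin m → A) : Dmap P x g η X = of (Dlow P x g η) *ᵥ X :=
  rfl

theorem gvec_eq_dotProduct_mulVec (g : Fin m → Fin m → A) (X Y : Fin m → A) :
    gvec g X Y = X ⬝ᵥ (of g *ᵥ Y) := by
  simp only [gvec, dotProduct, mulVec, of_apply, Finset.mul_sum, mul_assoc]

end PoissonMatrix

theorem Dmap_orthogonal_projection_general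
    {A : Type*} [CommRing A]
    (P : A → A → A)
    (hP_antisym : ∀ a b, P a b = - P b a)
    {m : ℕ} (x : Fin m → A) (g : Fin m → Fin m → A)
    (hg_symm : ∀ i j, g i j = g j i)
    (η : A)
    (hKP : ∀ a b, η * (∑ i, ∑ j, ∑ k, ∑ l,
        P a (x i) * g i j * P (x j) (x k) * g k l * P (x l) b) = - P a b) :
    (∀ X : Fin m → A, Dmap P x g η (Dmap P x g η X) = Dmap P x g η X) ∧
    (∀ X Y : Fin m → A, gvec g (Dmap P x g η X) Y = gvec g X (Dmap P x g η Y)) := by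
  have hB := poissonMatrix_transpose hP_antisym x
  have hG : (of g).IsSymm := IsSymm.ext fun i j => hg_symm j i
  have hD : of (Dlow P x g η) = -(η • (poissonMatrix P x * of g * poissonMatrix P x * of g)) := by
    rw [of_Dlow, hB, mul_neg, neg_mul, smul_neg]
  refine ⟨fun X => ?_, fun X Y => ?_⟩
  · rw [Dmap_eq_mulVec, Dmap_eq_mulVec, mulVec_mulVec, hD,
      (isIdempotentElem_neg_smul_mul_mul_mul (smul_poissonMatrix_mul_eq_neg hKP)).eq]
  · rw [gvec_eq_dotProduct_mulVec, gvec_eq_dotProduct_mulVec, Dmap_eq_mulVec, Dmap_eq_mulVec]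
    exact dotProduct_mulVec_mulVec_comm hG (hD ▸ isSymm_mul_neg_smul_mul_mul_mul hB hG η) X Y

/-- In a Kähler–Poisson algebra, the map `𝒟 : Aᵐ → Aᵐ` is an orthogonal
projection: `𝒟² = 𝒟` and `g(𝒟X, Y) = g(X, 𝒟Y)`. -/
theorem Dmap_orthogonal_projection
    {A : Type*} [CommRing A]
    (P : A → A → A)
    (hP_antisym : ∀ a b, P a b = - P b a)
    (hP_add : ∀ a b c, P a (b + c) = P a b + P a c)
    (hP_leib : ∀ a b c, P a (b * c) = P a b * c + b * P a c)
    (hP_jacobi : ∀ a b c, P a (P b c) + P b (P c a) + P c (P a b) = 0)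
    {m : ℕ} (x : Fin m → A) (g : Fin m → Fin m → A)
    (hg_symm : ∀ i j, g i j = g j i)
    (η : A)
    (hKP : ∀ a b, η * (∑ i, ∑ j, ∑ k, ∑ l,
        P a (x i) * g i j * P (x j) (x k) * g k l * P (x l) b) = - P a b) :
    (∀ X : Fin m → A, Dmap P x g η (Dmap P x g η X) = Dmap P x g η X) ∧
    (∀ X Y : Fin m → A, gvec g (Dmap P x g η X) Y = gvec g X (Dmap P x g η Y)) :=
  Dmap_orthogonal_projection_general P hP_antisym x g hg_symm η hKP
end

section
/- For a Kähler–Poisson algebra, the module $\mathfrak{g}$ of inner derivations is a finitely generated projective $\mathcal{A}$-module. -/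
/-- The `A`-module of inner derivations of a Poisson algebra `(A, P)`,
i.e. the module generated by the derivations `a ↦ {c, a}`. -/
def innerDer {A : Type*} [CommRing A] (P : A → A → A) : Submodule A (A → A) :=
  Submodule.span A {d : A → A | ∃ c : A, d = P c}

/-- The metric on derivations induced by the matrix `g` and the distinguished
elements `x¹,…,xᵐ`:  `g(α,β) = α(xⁱ) g_{ij} β(xʲ)`. -/
def gform {A : Type*} [CommRing A] {m : ℕ} (x : Fin m → A)
    (g : Fin m → Fin m → A) (α β : A → A) : A :=
  ∑ i, ∑ j, α (x i) * g i j * β (x j)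


/-!
The Kähler–Poisson identity says that every inner derivation `{c, ·}` is the combination
`∑ₗ ψ({c, ·})ₗ {xˡ, ·}` with coefficients `ψ(f)ₗ = -η f(xⁱ) gᵢⱼ {xʲ, xᵏ} gₖₗ`, which are
`A`-linear in `f`. Hence the same reconstruction holds on all of `𝔤`, so `𝔤` is a retract of `Aᵐ`
(with the idempotent `D = ψ ∘ ∑ₗ (·)ₗ {xˡ, ·}` on `Aᵐ`), i.e. finitely generated and projective.
-/

open Finset

section Retract

variable {R M ι : Type*} [CommRing R] [AddCommGroup M] [Module R M] [Fintype ι]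

theorem Submodule.finite_and_projective_of_linearCombination_eq (N : Submodule R M)
    (v : ι → M) (hv : ∀ i, v i ∈ N) (ψ : M →ₗ[R] ι → R)
    (h : ∀ n ∈ N, Fintype.linearCombination R v (ψ n) = n) :
    Module.Finite R N ∧ Module.Projective R N := by
  let φ : (ι → R) →ₗ[R] N := (Fintype.linearCombination R v).codRestrict N fun c => by
    rw [Fintype.linearCombination_apply]
    exact N.sum_mem fun i _ => N.smul_mem _ (hv i)
  have hsplit : φ ∘ₗ ψ.domRestrict N = LinearMap.id :=
    LinearMap.ext fun n => Subtype.ext (h n n.2)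
  exact ⟨Module.Finite.of_surjective φ fun n => ⟨ψ n, congr($hsplit n)⟩,
    Module.Projective.of_split _ _ hsplit⟩

theorem Submodule.finite_and_projective_span_of_linearCombination_eq (S : Set M)
    (v : ι → M) (hv : ∀ i, v i ∈ span R S) (ψ : M →ₗ[R] ι → R)
    (h : ∀ s ∈ S, Fintype.linearCombination R v (ψ s) = s) :
    Module.Finite R (span R S) ∧ Module.Projective R (span R S) :=
  (span R S).finite_and_projective_of_linearCombination_eq v hv ψ fun _ hn =>
    LinearMap.eqOn_span (f := (Fintype.linearCombination R v) ∘ₗ ψ) (g := LinearMap.id) h hn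

end Retract

section KaehlerPoisson

variable {A : Type*} [CommRing A] (P : A → A → A) {m : ℕ} (x : Fin m → A)
  (g : Fin m → Fin m → A) (η : A)

def kpCoeffMatrix (i l : Fin m) : A :=
  -(η * ∑ j, ∑ k, g i j * P (x j) (x k) * g k l)

def kpCoeff : (A → A) →ₗ[A] Fin m → A where
  toFun f l := ∑ i, f (x i) * kpCoeffMatrix P x g η i l
  map_add' f f' := by ext l; simp only [Pi.add_apply, add_mul, sum_add_distrib]
  map_smul' a f := by ext l; simp only [Pi.smul_apply, smul_eq_mul, mul_sum, mul_assoc,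
    RingHom.id_apply]

variable {P x g η}

theorem linearCombination_kpCoeff_apply (c b : A)
    (hKP : η * (∑ i, ∑ j, ∑ k, ∑ l,
        P c (x i) * g i j * P (x j) (x k) * g k l * P (x l) b) = - P c b) :
    Fintype.linearCombination A (fun l => P (x l)) (kpCoeff P x g η (P c)) b = P c b := by
  have hsum : ∑ l, (∑ i, P c (x i) * kpCoeffMatrix P x g η i l) * P (x l) b =
      -(η * ∑ i, ∑ j, ∑ k, ∑ l, P c (x i) * g i j * P (x j) (x k) * g k l * P (x l) b) := by
    simp only [kpCoeffMatrix, sum_mul, mul_sum, ← sum_neg_distrib]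
    rw [sum_comm]
    refine sum_congr rfl fun i _ => ?_
    rw [sum_comm]
    refine sum_congr rfl fun j _ => ?_
    rw [sum_comm]
    refine sum_congr rfl fun k _ => sum_congr rfl fun l _ => by ring
  rw [Fintype.linearCombination_apply, Finset.sum_apply]
  simpa [kpCoeff, hKP] using hsum

end KaehlerPoisson

theorem innerDer_finite_projective_general
    {A : Type*} [CommRing A]
    (P : A → A → A)
    {m : ℕ} (x : Fin m → A) (g : Fin m → Fin m → A)
    (η : A)
    (hKP : ∀ a b, η * (∑ i, ∑ j, ∑ k, ∑ l,
        P a (x i) * g i j * P (x j) (x k) * g k l * P (x l) b) = - P a b) :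
    Module.Finite A (innerDer P) ∧ Module.Projective A (innerDer P) := by
  refine Submodule.finite_and_projective_span_of_linearCombination_eq _ (fun l => P (x l))
    (fun l => Submodule.subset_span ⟨x l, rfl⟩) (kpCoeff P x g η) ?_
  rintro _ ⟨c, rfl⟩
  exact funext fun b => linearCombination_kpCoeff_apply c b (hKP c b)

/-- For a Kähler–Poisson algebra, the module `𝔤` of inner derivations is a
finitely generated projective `A`-module. -/
theorem innerDer_finite_projective
    {A : Type*} [CommRing A]
    (P : A → A → A)
    (hP_antisym : ∀ a b, P a b = - P b a)
    (hP_add : ∀ a b c, P a (b + c) = P a b + P a c)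
    (hP_leib : ∀ a b c, P a (b * c) = P a b * c + b * P a c)
    (hP_jacobi : ∀ a b c, P a (P b c) + P b (P c a) + P c (P a b) = 0)
    {m : ℕ} (x : Fin m → A) (g : Fin m → Fin m → A)
    (hg_symm : ∀ i j, g i j = g j i)
    (η : A)
    (hKP : ∀ a b, η * (∑ i, ∑ j, ∑ k, ∑ l,
        P a (x i) * g i j * P (x j) (x k) * g k l * P (x l) b) = - P a b) :
    Module.Finite A (innerDer P) ∧ Module.Projective A (innerDer P) :=
  innerDer_finite_projective_general P x g η hKP
end

section
/- Let $\mathcal{K}=(\mathcal{A},\{x^1,\ldots,x^m\},g)$ be a Kähler–Poisson algebra and define $\mathcal{D}^i(a)=\eta\{x^k,a\}g_{kl}\{x^l,x^i\}$. Then the $\mathcal{A}$-module $\mathfrak{g}$ of inner derivations is generated by $\{\mathcal{D}^1,\ldots,\mathcal{D}^m\}$. -/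
/-- The derivation `𝒟ⁱ(a) = η {xᵏ, a} g_{kl} {xˡ, xⁱ}`. -/
def Dder {A : Type*} [CommRing A] {m : ℕ} (P : A → A → A) (x : Fin m → A)
    (g : Fin m → Fin m → A) (η : A) (i : Fin m) : A → A :=
  fun a => η * ∑ k, ∑ l, P (x k) a * g k l * P (x l) (x i)

/-!
Each `𝒟ⁱ` is an `A`-linear combination of the inner derivations `{xᵏ, ·}`. Conversely, the
Kähler–Poisson identity writes `{c, b}` as `-η {c, xⁱ} g_{ij} {xʲ, xᵏ} g_{kl} {xˡ, b}`, and by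
antisymmetry of the bracket and symmetry of `g` the tail `η {xʲ, xᵏ} g_{kl} {xˡ, b}` is `-𝒟ʲ(b)`;
hence `{c, ·} = ∑ⱼ ({c, xⁱ} g_{ij}) 𝒟ʲ`.
-/

open Finset

section

variable {A : Type*} [CommRing A] (P : A → A → A) {m : ℕ} (x : Fin m → A)
  (g : Fin m → Fin m → A) (η : A)

theorem Dder_eq_sum_smul (i : Fin m) :
    Dder P x g η i = ∑ k, ∑ l, (η * g k l * P (x l) (x i)) • P (x k) := by
  funext a
  simp only [Dder, Finset.sum_apply, Pi.smul_apply, smul_eq_mul, mul_sum]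
  exact sum_congr rfl fun k _ => sum_congr rfl fun l _ => by ring

theorem Dder_mem_innerDer (i : Fin m) : Dder P x g η i ∈ innerDer P := by
  rw [Dder_eq_sum_smul]
  exact Submodule.sum_mem _ fun k _ => Submodule.sum_mem _ fun l _ =>
    Submodule.smul_mem _ _ (Submodule.subset_span ⟨x k, rfl⟩)

variable {P g}

theorem mul_sum_bracket_mul_bracket_eq_neg_Dder (hP_antisym : ∀ a b, P a b = -P b a)
    (hg_symm : ∀ i j, g i j = g j i) (j : Fin m) (b : A) :
    η * ∑ k, ∑ l, P (x j) (x k) * g k l * P (x l) b = -Dder P x g η j b := by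
  rw [Dder, sum_comm, ← mul_neg, ← sum_neg_distrib]
  refine congrArg (η * ·) (sum_congr rfl fun k _ => ?_)
  rw [← sum_neg_distrib]
  refine sum_congr rfl fun l _ => ?_
  rw [hP_antisym (x j) (x l), hg_symm l k]
  ring

theorem bracket_eq_sum_smul_Dder (hP_antisym : ∀ a b, P a b = -P b a)
    (hg_symm : ∀ i j, g i j = g j i)
    (hKP : ∀ a b, η * (∑ i, ∑ j, ∑ k, ∑ l,
        P a (x i) * g i j * P (x j) (x k) * g k l * P (x l) b) = -P a b) (c : A) :
    P c = ∑ j, (∑ i, P c (x i) * g i j) • Dder P x g η j := by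
  funext b
  simp only [Finset.sum_apply, Pi.smul_apply, smul_eq_mul]
  calc P c b = -(η * ∑ i, ∑ j, ∑ k, ∑ l,
        P c (x i) * g i j * P (x j) (x k) * g k l * P (x l) b) := by rw [hKP, neg_neg]
    _ = ∑ i, ∑ j, P c (x i) * g i j * -(η * ∑ k, ∑ l, P (x j) (x k) * g k l * P (x l) b) := by
      simp only [mul_sum, ← sum_neg_distrib]
      congr! 4 with i _ j _ k _ l _
      ring
    _ = ∑ i, ∑ j, P c (x i) * g i j * Dder P x g η j b := by
      simp only [mul_sum_bracket_mul_bracket_eq_neg_Dder x η hP_antisym hg_symm, neg_neg]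
    _ = ∑ j, (∑ i, P c (x i) * g i j) * Dder P x g η j b := by
      rw [sum_comm]
      simp only [sum_mul]

end

theorem innerDer_generated_by_Dder_general
    {A : Type*} [CommRing A]
    (P : A → A → A)
    (hP_antisym : ∀ a b, P a b = - P b a)
    {m : ℕ} (x : Fin m → A) (g : Fin m → Fin m → A)
    (hg_symm : ∀ i j, g i j = g j i)
    (η : A)
    (hKP : ∀ a b, η * (∑ i, ∑ j, ∑ k, ∑ l,
        P a (x i) * g i j * P (x j) (x k) * g k l * P (x l) b) = - P a b) :
    Submodule.span A (Set.range (Dder P x g η)) = innerDer P := by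
  refine le_antisymm (Submodule.span_le.mpr ?_) (Submodule.span_le.mpr ?_)
  · rintro _ ⟨i, rfl⟩
    exact Dder_mem_innerDer P x g η i
  · rintro _ ⟨c, rfl⟩
    rw [bracket_eq_sum_smul_Dder x η hP_antisym hg_symm hKP c]
    exact Submodule.sum_mem _ fun j _ => Submodule.smul_mem _ _ (Submodule.subset_span ⟨j, rfl⟩)

/-- In a Kähler–Poisson algebra, the module `𝔤` of inner derivations is
generated, as an `A`-module, by `𝒟¹, …, 𝒟ᵐ`. -/
theorem innerDer_generated_by_Dder
    {A : Type*} [CommRing A]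
    (P : A → A → A)
    (hP_antisym : ∀ a b, P a b = - P b a)
    (hP_add : ∀ a b c, P a (b + c) = P a b + P a c)
    (hP_leib : ∀ a b c, P a (b * c) = P a b * c + b * P a c)
    (hP_jacobi : ∀ a b c, P a (P b c) + P b (P c a) + P c (P a b) = 0)
    {m : ℕ} (x : Fin m → A) (g : Fin m → Fin m → A)
    (hg_symm : ∀ i j, g i j = g j i)
    (η : A)
    (hKP : ∀ a b, η * (∑ i, ∑ j, ∑ k, ∑ l,
        P a (x i) * g i j * P (x j) (x k) * g k l * P (x l) b) = - P a b) :
    Submodule.span A (Set.range (Dder P x g η)) = innerDer P :=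
  innerDer_generated_by_Dder_general P hP_antisym x g hg_symm η hKP
end

section
/- Let $(\phi,\psi)$ be a morphism of Kähler–Poisson algebras from $(\mathcal{A},\{x^i\},g)$ to $(\mathcal{A}',\{y^j\},g')$ such that any $\alpha'\in\mathfrak{g}'$ vanishing on the image of $\phi$ is zero. Then $\psi(a\{b,\cdot\}_{\mathcal{A}})=\phi(a)\{\phi(b),\cdot\}_{\mathcal{A}'}$ for all $a,b\in\mathcal{A}$; i.e., $\psi$ is determined by $\phi$. -/
/-! `ψ α` and `φ(a){φ(b),·}` agree on the image of `φ`, since `ψ α (φ c) = φ (α c)` by the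
anchor condition; derivations in `𝔤'` that agree on the image of `φ` coincide. -/

theorem mul_poisson_mem_innerDer {A : Type*} [CommRing A] (P : A → A → A) (a b : A) :
    (fun c => a * P b c) ∈ innerDer P :=
  Submodule.smul_mem _ a (Submodule.subset_span ⟨b, rfl⟩)

theorem Submodule.eq_of_apply_comp_eq {A R : Type*} [CommRing R] {M : Submodule R (R → R)}
    {f : A → R} (hnd : ∀ α : M, (∀ a, (α : R → R) (f a) = 0) → α = 0) {α β : M}
    (h : ∀ a, (α : R → R) (f a) = (β : R → R) (f a)) : α = β :=
  sub_eq_zero.mp <| hnd _ fun a => by simp [h]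

theorem kahlerPoisson_morphism_psi_determined_general
    {K : Type*} [Field K]
    {A : Type*} [CommRing A] [Algebra K A]
    {A' : Type*} [CommRing A'] [Algebra K A']
    (P : A → A → A)
    (P' : A' → A' → A')
    -- the morphism (φ, ψ)
    (φ : A →ₐ[K] A')
    (hφP : ∀ a b, φ (P a b) = P' (φ a) (φ b))
    (ψ : innerDer P → innerDer P')
    (hψ_anchor : ∀ (α : innerDer P) (a : A),
      φ ((α : A → A) a) = (ψ α : A' → A') (φ a))
    -- derivations are determined by their values on the image of φ
    (hnd : ∀ α' : innerDer P', (∀ a : A, (α' : A' → A') (φ a) = 0) → α' = 0) :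
    ∀ (a b : A) (α : innerDer P), ((α : A → A) = fun c => a * P b c) →
      ((ψ α : A' → A') = fun c => φ a * P' (φ b) c) := by
  intro a b α hα
  have hψα : ψ α = ⟨_, mul_poisson_mem_innerDer P' (φ a) (φ b)⟩ :=
    Submodule.eq_of_apply_comp_eq hnd fun c => by simp [← hψ_anchor, hα, hφP]
  exact congrArg Subtype.val hψα

/-- For a morphism `(φ, ψ)` of Kähler–Poisson algebras such that any
derivation in `𝔤'` vanishing on the image of `φ` is zero, the map `ψ` is
determined by `φ`: `ψ(a{b,·}) = φ(a){φ(b),·}`. -/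
theorem kahlerPoisson_morphism_psi_determined
    {K : Type*} [Field K]
    {A : Type*} [CommRing A] [Algebra K A]
    {A' : Type*} [CommRing A'] [Algebra K A']
    (P : A → A → A)
    (hP_antisym : ∀ a b, P a b = - P b a)
    (hP_add : ∀ a b c, P a (b + c) = P a b + P a c)
    (hP_leib : ∀ a b c, P a (b * c) = P a b * c + b * P a c)
    (hP_jacobi : ∀ a b c, P a (P b c) + P b (P c a) + P c (P a b) = 0)
    (P' : A' → A' → A')
    (hP'_antisym : ∀ a b, P' a b = - P' b a)
    (hP'_add : ∀ a b c, P' a (b + c) = P' a b + P' a c)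
    (hP'_leib : ∀ a b c, P' a (b * c) = P' a b * c + b * P' a c)
    (hP'_jacobi : ∀ a b c, P' a (P' b c) + P' b (P' c a) + P' c (P' a b) = 0)
    {m : ℕ} (x : Fin m → A) (g : Fin m → Fin m → A)
    (hg_symm : ∀ i j, g i j = g j i) (η : A)
    (hKP : ∀ a b, η * (∑ i, ∑ j, ∑ k, ∑ l,
        P a (x i) * g i j * P (x j) (x k) * g k l * P (x l) b) = - P a b)
    {m' : ℕ} (y : Fin m' → A') (g' : Fin m' → Fin m' → A')
    (hg'_symm : ∀ i j, g' i j = g' j i) (η' : A')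
    (hKP' : ∀ a b, η' * (∑ i, ∑ j, ∑ k, ∑ l,
        P' a (y i) * g' i j * P' (y j) (y k) * g' k l * P' (y l) b) = - P' a b)
    -- the morphism (φ, ψ)
    (φ : A →ₐ[K] A')
    (hφP : ∀ a b, φ (P a b) = P' (φ a) (φ b))
    (hfin : ∀ a ∈ Algebra.adjoin K (Set.range x), φ a ∈ Algebra.adjoin K (Set.range y))
    (ψ : innerDer P → innerDer P')
    (hψ_add : ∀ α β, ψ (α + β) = ψ α + ψ β)
    (hψ_smul : ∀ (a : A) (α : innerDer P), ψ (a • α) = φ a • ψ α)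
    (hψ_anchor : ∀ (α : innerDer P) (a : A),
      φ ((α : A → A) a) = (ψ α : A' → A') (φ a))
    (hψ_lie : ∀ α β γ : innerDer P,
      ((γ : A → A) = fun a => (α : A → A) ((β : A → A) a) - (β : A → A) ((α : A → A) a)) →
      ((ψ γ : A' → A') =
        fun a => (ψ α : A' → A') ((ψ β : A' → A') a) - (ψ β : A' → A') ((ψ α : A' → A') a)))
    (hψ_metric : ∀ α β : innerDer P,
      φ (gform x g (α : A → A) (β : A → A)) = gform y g' (ψ α : A' → A') (ψ β : A' → A'))
    -- derivations are determined by their values on the image of φ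
    (hnd : ∀ α' : innerDer P', (∀ a : A, (α' : A' → A') (φ a) = 0) → α' = 0) :
    ∀ (a b : A) (α : innerDer P), ((α : A → A) = fun c => a * P b c) →
      ((ψ α : A' → A') = fun c => φ a * P' (φ b) c) :=
  kahlerPoisson_morphism_psi_determined_general P P' φ hφP ψ hψ_anchor hnd
end
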